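/- arXiv:1811.00950 — 2 statements merged into one kernel-verified Lean document; each statement's English description precedes it below -/
import Mathlib

section
/- For every n ≥ k ≥ 1 there exists a family F of functions from {1,…,n} to {1,…,k²} with |F| ≤ k^{O(1)}·log n such that for every subset S ⊆ {1,…,n} with |S| = k, some f ∈ F is injective on S. -/
/-!
A uniformly random `f : Fin n → Fin (k²)` is injective on a fixed `k`-set with probability at
least `1/2`, since `(k²)^k ≤ 2 · (k²)(k² - 1)⋯(k² - k + 1)`. Averaging, some `f` is injective on
at least half of any family of `k`-sets; choosing such an `f` greedily and discarding the sets it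
splits, `t` steps handle any family of fewer than `2^t` sets. All `C(n, k) ≤ n^k < 2^(k(log₂ n + 1))`
`k`-subsets of `Fin n` are therefore split by a family of `k (log₂ n + 1)` functions.
-/

open Finset

theorem Nat.pow_mul_le_descFactorial_mul_add {m j : ℕ} (hj : j ≤ m) :
    m ^ j * m ≤ m.descFactorial j * m + j.choose 2 * m ^ j := by
  induction j with
  | zero => simp
  | succ j ih =>
    have hstep : m.descFactorial j * m = m.descFactorial (j + 1) + j * m.descFactorial j := by
      rw [Nat.descFactorial_succ, ← Nat.add_mul, Nat.sub_add_cancel (by omega), mul_comm]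
    have hD : j * m.descFactorial j ≤ j * m ^ j :=
      Nat.mul_le_mul_left j (Nat.descFactorial_le_pow m j)
    calc m ^ (j + 1) * m = m * (m ^ j * m) := by ring
      _ ≤ m * (m.descFactorial j * m + j.choose 2 * m ^ j) := Nat.mul_le_mul_left m (ih (by omega))
      _ = (m.descFactorial (j + 1) + j * m.descFactorial j) * m + j.choose 2 * m ^ (j + 1) := by
        rw [← hstep]; ring
      _ ≤ (m.descFactorial (j + 1) + j * m ^ j) * m + j.choose 2 * m ^ (j + 1) := by gcongr
      _ = m.descFactorial (j + 1) * m + (j + 1).choose 2 * m ^ (j + 1) := by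
        rw [Nat.choose_succ_succ', Nat.choose_one_right]; ring

theorem Nat.pow_le_two_mul_descFactorial_sq {k : ℕ} (hk : 1 ≤ k) :
    (k ^ 2) ^ k ≤ 2 * (k ^ 2).descFactorial k := by
  have hchoose : 2 * k.choose 2 ≤ k ^ 2 :=
    calc 2 * k.choose 2 ≤ k * (k - 1) := by rw [Nat.choose_two_right]; exact Nat.mul_div_le _ 2
      _ ≤ k ^ 2 := by rw [sq]; exact Nat.mul_le_mul_left k (Nat.sub_le k 1)
  have h := Nat.pow_mul_le_descFactorial_mul_add (Nat.le_self_pow two_ne_zero k)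
  have := Nat.mul_le_mul_right ((k ^ 2) ^ k) hchoose
  exact Nat.le_of_mul_le_mul_right (by linarith) (by positivity : 0 < k ^ 2)

theorem descFactorial_mul_pow_le_card_injOn {α β : Type*} [Fintype α] [DecidableEq α]
    [Fintype β] [DecidableEq β] (s : Finset α) :
    (Fintype.card β).descFactorial #s * Fintype.card β ^ (Fintype.card α - #s) ≤
      #{f : α → β | Set.InjOn f s} := by
  let extend : (s ↪ β) × ({x // x ∉ s} → β) → α → β :=
    fun p x => if h : x ∈ s then p.1 ⟨x, h⟩ else p.2 ⟨x, h⟩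
  have hcard : Fintype.card ((s ↪ β) × ({x // x ∉ s} → β)) =
      (Fintype.card β).descFactorial #s * Fintype.card β ^ (Fintype.card α - #s) := by
    rw [Fintype.card_prod, Fintype.card_embedding_eq, Fintype.card_fun, Fintype.card_coe,
      Fintype.card_subtype_compl, Fintype.card_coe]
  rw [← hcard, ← card_univ]
  refine card_le_card_of_injOn extend (fun p _ => ?_) (fun p _ q _ hpq => ?_)
  · simp only [coe_filter, mem_univ, true_and, Set.mem_ofPred_eq]
    intro x hx y hy hxy
    simp only [extend, dif_pos (mem_coe.mp hx), dif_pos (mem_coe.mp hy)] at hxy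
    exact congrArg Subtype.val (p.1.injective hxy)
  · have h x := congrFun hpq x
    refine Prod.ext (DFunLike.ext _ _ ?_) (funext ?_)
    · rintro ⟨x, hx⟩
      simpa only [extend, dif_pos hx] using h x
    · rintro ⟨x, hx⟩
      simpa only [extend, dif_neg hx] using h x

theorem sq_pow_le_two_mul_card_injOn {n k : ℕ} (hk : 1 ≤ k) (hkn : k ≤ n)
    (S : Finset (Fin n)) (hS : #S = k) :
    (k ^ 2) ^ n ≤ 2 * #{f : Fin n → Fin (k ^ 2) | Set.InjOn f S} := by
  have hinj := descFactorial_mul_pow_le_card_injOn (β := Fin (k ^ 2)) S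
  simp only [Fintype.card_fin, hS] at hinj
  calc (k ^ 2) ^ n = (k ^ 2) ^ k * (k ^ 2) ^ (n - k) := by rw [← pow_add, Nat.add_sub_cancel' hkn]
    _ ≤ 2 * (k ^ 2).descFactorial k * (k ^ 2) ^ (n - k) := by
      gcongr; exact Nat.pow_le_two_mul_descFactorial_sq hk
    _ ≤ _ := by rw [mul_assoc]; exact Nat.mul_le_mul_left 2 hinj

theorem exists_card_le_two_mul_card_filter {α β : Type*} [Fintype β] [Nonempty β]
    (good : β → α → Prop) [∀ b a, Decidable (good b a)] (𝒮 : Finset α)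
    (hgood : ∀ a ∈ 𝒮, Fintype.card β ≤ 2 * #{b | good b a}) :
    ∃ b, #𝒮 ≤ 2 * #{a ∈ 𝒮 | good b a} := by
  have hsum : ∑ _ : β, #𝒮 ≤ ∑ b, 2 * #{a ∈ 𝒮 | good b a} :=
    calc ∑ _ : β, #𝒮 = ∑ _ ∈ 𝒮, Fintype.card β := by simp [mul_comm]
      _ ≤ ∑ a ∈ 𝒮, 2 * #{b | good b a} := sum_le_sum hgood
      _ = ∑ b, 2 * #{a ∈ 𝒮 | good b a} := by
        rw [← mul_sum, ← mul_sum]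
        exact congrArg _ (sum_card_bipartiteAbove_eq_sum_card_bipartiteBelow fun a b => good b a)
  obtain ⟨b, -, hb⟩ := exists_le_of_sum_le univ_nonempty hsum
  exact ⟨b, hb⟩

theorem exists_cover_of_card_lt_two_pow {α β : Type*} [Fintype β] [Nonempty β]
    (good : β → α → Prop) [∀ b a, Decidable (good b a)] (t : ℕ) (𝒮 : Finset α) (h𝒮 : #𝒮 < 2 ^ t)
    (hgood : ∀ a ∈ 𝒮, Fintype.card β ≤ 2 * #{b | good b a}) :
    ∃ F : Finset β, #F ≤ t ∧ ∀ a ∈ 𝒮, ∃ b ∈ F, good b a := by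
  classical
  induction t generalizing 𝒮 with
  | zero =>
    rw [pow_zero, Nat.lt_one_iff, card_eq_zero] at h𝒮
    exact ⟨∅, by simp, by simp [h𝒮]⟩
  | succ t ih =>
    obtain ⟨b, hb⟩ := exists_card_le_two_mul_card_filter good 𝒮 hgood
    have hsplit := card_filter_add_card_filter_not (s := 𝒮) (fun a => good b a)
    obtain ⟨F, hF, hcover⟩ := ih {a ∈ 𝒮 | ¬ good b a} (by rw [pow_succ] at h𝒮; omega)
      (fun a ha => hgood a (mem_filter.mp ha).1)
    refine ⟨insert b F, (card_insert_le b F).trans (by omega), fun a ha => ?_⟩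
    by_cases hba : good b a
    · exact ⟨b, mem_insert_self b F, hba⟩
    · obtain ⟨c, hc, hca⟩ := hcover a (mem_filter.mpr ⟨ha, hba⟩)
      exact ⟨c, mem_insert_of_mem hc, hca⟩

/-- Splitter existence (Alon–Yuster–Zwick): for all `n ≥ k ≥ 1` there is a family `F` of
functions from `Fin n` to `Fin (k^2)` of size at most `k^{O(1)} · log n` such that every
`k`-element subset `S` of `Fin n` is hashed injectively by some member of `F`. -/
theorem splitter_exists :
    ∃ C : ℕ, 0 < C ∧ ∀ n k : ℕ, 1 ≤ k → k ≤ n →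
      ∃ F : Finset (Fin n → Fin (k ^ 2)),
        F.card ≤ C * k ^ C * (Nat.log 2 n + 1) ∧
        ∀ S : Finset (Fin n), S.card = k → ∃ f ∈ F, Set.InjOn f ↑S := by
  refine ⟨1, one_pos, fun n k hk hkn => ?_⟩
  have : Nonempty (Fin (k ^ 2)) := ⟨⟨0, by positivity⟩⟩
  have hfew : #(powersetCard k (univ : Finset (Fin n))) < 2 ^ (k * (Nat.log 2 n + 1)) :=
    calc #(powersetCard k (univ : Finset (Fin n))) = n.choose k := by simp
      _ ≤ n ^ k := Nat.choose_le_pow n k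
      _ < (2 ^ (Nat.log 2 n + 1)) ^ k :=
        Nat.pow_lt_pow_left (Nat.lt_pow_succ_log_self one_lt_two n) (by omega)
      _ = 2 ^ (k * (Nat.log 2 n + 1)) := by rw [← pow_mul, mul_comm]
  obtain ⟨F, hF, hcover⟩ := exists_cover_of_card_lt_two_pow
    (fun (f : Fin n → Fin (k ^ 2)) (S : Finset (Fin n)) => Set.InjOn f ↑S) _ _ hfew
    fun S hS => by
      simpa using sq_pow_le_two_mul_card_injOn hk hkn S (mem_powersetCard.mp hS).2
  exact ⟨F, by simpa using hF, fun S hS => hcover S (mem_powersetCard.mpr ⟨subset_univ S, hS⟩)⟩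
end

section
/- Consider an integer program max{c^T x : Cx = d, ‖x‖₁ ≤ k, ℓ ≤ x ≤ u, x ∈ ℤ^t} where C has m rows. If two variables i and j have identical columns of C (C_{·,i} = C_{·,j}), u_i > 0, u_j > 0, and c_i ≥ c_j, then for any optimal solution x* with x*_j > 0 and x*_i < u_i, the vector obtained by decreasing x*_j by 1 and increasing x*_i by 1 is also feasible and has objective value at least c^T x*. Consequently, there is an optimal solution whose positive support among variables of each fixed column type is contained in the k variables of maximal objective coefficient among those with positive upper bound. -/
/-- Exchange argument: in `max{cᵀx : Cx = d, ‖x‖₁ ≤ k, ℓ ≤ x ≤ u}`, if variables `i, j`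
have identical columns, positive upper bounds, and `c i ≥ c j`, then for any optimal `x`
with `x j > 0` and `x i < u i`, decreasing `x j` by one and increasing `x i` by one
remains feasible and does not decrease the objective. -/
theorem exchange_argument {m t : ℕ} (C : Matrix (Fin m) (Fin t) ℤ) (d : Fin m → ℤ)
    (c ℓ u : Fin t → ℤ) (k : ℤ)
    (hℓ : ∀ a, ℓ a ≤ 0) (hu : ∀ a, 0 ≤ u a)
    (i j : Fin t) (hij : i ≠ j)
    (hcol : ∀ row, C row i = C row j)
    (hui : 0 < u i) (huj : 0 < u j) (hc : c j ≤ c i)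
    (x : Fin t → ℤ)
    (hfeas : C.mulVec x = d ∧ (∑ a, |x a|) ≤ k ∧ ∀ a, ℓ a ≤ x a ∧ x a ≤ u a)
    (hopt : ∀ y : Fin t → ℤ,
      (C.mulVec y = d ∧ (∑ a, |y a|) ≤ k ∧ ∀ a, ℓ a ≤ y a ∧ y a ≤ u a) →
      ∑ a, c a * y a ≤ ∑ a, c a * x a)
    (hxj : 0 < x j) (hxi : x i < u i) :
    let x' : Fin t → ℤ := fun a => x a + (if a = i then 1 else 0) - (if a = j then 1 else 0)
    (C.mulVec x' = d ∧ (∑ a, |x' a|) ≤ k ∧ ∀ a, ℓ a ≤ x' a ∧ x' a ≤ u a) ∧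
    ∑ a, c a * x a ≤ ∑ a, c a * x' a := by
  intro x'
  obtain ⟨hCx, hnorm, hbnd⟩ := hfeas
  -- generic sum lemma
  have hsum : ∀ f : Fin t → ℤ, ∑ a, f a * x' a = (∑ a, f a * x a) + f i - f j := by
    intro f
    have h1 : ∀ a, f a * x' a
        = f a * x a + (if a = i then f a else 0) - (if a = j then f a else 0) := by
      intro a
      simp only [x']
      split_ifs <;> ring
    simp only [h1]
    rw [Finset.sum_sub_distrib, Finset.sum_add_distrib,
      Finset.sum_ite_eq' Finset.univ i f, Finset.sum_ite_eq' Finset.univ j f]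
    simp
  refine ⟨⟨?_, ?_, ?_⟩, ?_⟩
  · funext row
    have := congrFun hCx row
    simp only [Matrix.mulVec, dotProduct] at this ⊢
    rw [hsum (fun a => C row a)]
    rw [this, hcol row]; ring
  · have hle : ∀ a ∈ Finset.univ, |x' a|
        ≤ |x a| + (if a = i then 1 else 0) - (if a = j then (1:ℤ) else 0) := by
      intro a _
      by_cases hai : a = i
      · subst hai
        simp only [x', if_pos rfl, if_neg hij]
        have := abs_add_le (x a) 1
        simpa using this
      · by_cases haj : a = j
        · subst haj
          simp only [x', if_neg hai, if_pos rfl, if_true]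
          have h1 : |x a + 0 - 1| = x a + 0 - 1 := abs_of_nonneg (by omega)
          rw [h1, abs_of_pos hxj]
        · simp [x', hai, haj]
    calc ∑ a, |x' a| ≤ ∑ a, (|x a| + (if a = i then 1 else 0) - (if a = j then (1:ℤ) else 0)) :=
          Finset.sum_le_sum hle
      _ = (∑ a, |x a|) + 1 - 1 := by
          rw [Finset.sum_sub_distrib, Finset.sum_add_distrib]
          simp
      _ ≤ k := by omega
  · intro a
    have hb := hbnd a
    by_cases hai : a = i
    · subst hai
      simp only [x', if_pos rfl, if_neg hij]
      constructor <;> omega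
    · by_cases haj : a = j
      · subst haj
        simp only [x', if_neg hai, if_pos rfl]
        have := hℓ a
        constructor <;> omega
      · simp only [x', if_neg hai, if_neg haj]
        constructor <;> omega
  · rw [hsum c]
    omega
end
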